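/- Under a balanced ranked set sample with consistent rankings and true AUC δ₀, the inequalities 0 ≤ (ᾱ − δ̄₀²) + (β̄ − δ̄₀²) ≤ δ₀ − δ̄₀² hold. -/

import Mathlib

open MeasureTheory ProbabilityTheory Filter Finset Topology BoundedContinuousFunction

noncomputable section

namespace RSSAUC

/-- `φ(x,y) = 1` if `x < y` and `0` otherwise. -/
def phi (x y : ℝ) : ℝ := if x < y then 1 else 0

variable {Ω : Type*} [MeasurableSpace Ω]

/-- The CDF of a random variable `Z` under the probability measure `P`. -/
def cdfOf (P : Measure Ω) (Z : Ω → ℝ) (t : ℝ) : ℝ := (P {ω | Z ω ≤ t}).toReal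

/-- The CDF of a measure on `ℝ`. -/
def cdfM (μ : Measure ℝ) (t : ℝ) : ℝ := (μ (Set.Iic t)).toReal

/-- `P(W < Z)` for independent `W ~ μ` and `Z ~ ν`. -/
def probLT (μ ν : Measure ℝ) : ℝ := ((μ.prod ν) {p : ℝ × ℝ | p.1 < p.2}).toReal

/-- A balanced ranked set sample (BRSS) with consistent rankings: `X [i]j` (`i = 1,…,m`,
`j = 1,…,k`) and `Y [r]s` (`r = 1,…,n`, `s = 1,…,l`) are mutually independent; within the
`i`-th (resp. `r`-th) stratum the `X` (resp. `Y`) variables share a common CDF `Fi i`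
(resp. `Gr r`), and the continuous population CDFs satisfy `F = (1/m) ∑ᵢ Fi i` and
`G = (1/n) ∑ᵣ Gr r`. -/
structure IsBRSS (P : Measure Ω) (F G : ℝ → ℝ) {m n k l : ℕ}
    (Fi : Fin m → ℝ → ℝ) (Gr : Fin n → ℝ → ℝ)
    (X : Fin m → Fin k → Ω → ℝ) (Y : Fin n → Fin l → Ω → ℝ) : Prop where
  hm : 1 ≤ m
  hn : 1 ≤ n
  hk : 1 < k
  hl : 1 < l
  contF : Continuous F
  contG : Continuous G
  meas_X : ∀ i j, Measurable (X i j)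
  meas_Y : ∀ r s, Measurable (Y r s)
  indep : iIndepFun (m := fun _ : (Fin m × Fin k) ⊕ (Fin n × Fin l) => (inferInstance : MeasurableSpace ℝ))
      (Sum.elim (fun p : Fin m × Fin k => X p.1 p.2) (fun p : Fin n × Fin l => Y p.1 p.2)) P
  cdf_X : ∀ i j t, cdfOf P (X i j) t = Fi i t
  cdf_Y : ∀ r s t, cdfOf P (Y r s) t = Gr r t
  F_avg : ∀ t, F t = (∑ i, Fi i t) / m
  G_avg : ∀ t, G t = (∑ r, Gr r t) / n

/-- An unbalanced ranked set sample (URSS) with consistent rankings. -/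
structure IsURSS (P : Measure Ω) (F G : ℝ → ℝ) {m n : ℕ} {k : Fin m → ℕ} {l : Fin n → ℕ}
    (Fi : Fin m → ℝ → ℝ) (Gr : Fin n → ℝ → ℝ)
    (X : ∀ i, Fin (k i) → Ω → ℝ) (Y : ∀ r, Fin (l r) → Ω → ℝ) : Prop where
  hm : 1 ≤ m
  hn : 1 ≤ n
  hk : ∀ i, 1 < k i
  hl : ∀ r, 1 < l r
  contF : Continuous F
  contG : Continuous G
  meas_X : ∀ i j, Measurable (X i j)
  meas_Y : ∀ r s, Measurable (Y r s)
  indep : iIndepFun (m := fun _ : (Σ i, Fin (k i)) ⊕ (Σ r, Fin (l r)) => (inferInstance : MeasurableSpace ℝ))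
      (Sum.elim (fun p : Σ i, Fin (k i) => X p.1 p.2) (fun p : Σ r, Fin (l r) => Y p.1 p.2)) P
  cdf_X : ∀ i j t, cdfOf P (X i j) t = Fi i t
  cdf_Y : ∀ r s t, cdfOf P (Y r s) t = Gr r t
  F_avg : ∀ t, F t = (∑ i, Fi i t) / m
  G_avg : ∀ t, G t = (∑ r, Gr r t) / n

/-- Mann–Whitney statistic for BRSS data. -/
def deltaHatB {m n k l : ℕ} (X : Fin m → Fin k → Ω → ℝ) (Y : Fin n → Fin l → Ω → ℝ)
    (ω : Ω) : ℝ :=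
  (∑ i, ∑ j, ∑ r, ∑ s, phi (X i j ω) (Y r s ω)) / (m * k * n * l)

/-- Estimated placement value `Û_{rs}` for BRSS data. -/
def UhatB {m n k l : ℕ} (X : Fin m → Fin k → Ω → ℝ) (Y : Fin n → Fin l → Ω → ℝ)
    (r : Fin n) (s : Fin l) (ω : Ω) : ℝ :=
  1 - (∑ i, ∑ j, phi (X i j ω) (Y r s ω)) / (m * k)

/-- `V¹⁰(X_{[i]j})` for BRSS data. -/
def V10B {m n k l : ℕ} (X : Fin m → Fin k → Ω → ℝ) (Y : Fin n → Fin l → Ω → ℝ)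
    (i : Fin m) (j : Fin k) (ω : Ω) : ℝ :=
  (∑ r, ∑ s, phi (X i j ω) (Y r s ω)) / (n * l)

/-- `V⁰¹(Y_{[r]s})` for BRSS data. -/
def V01B {m n k l : ℕ} (X : Fin m → Fin k → Ω → ℝ) (Y : Fin n → Fin l → Ω → ℝ)
    (r : Fin n) (s : Fin l) (ω : Ω) : ℝ :=
  (∑ i, ∑ j, phi (X i j ω) (Y r s ω)) / (m * k)

/-- `(S¹⁰)²` for BRSS data. -/
def S10sqB {m n k l : ℕ} (X : Fin m → Fin k → Ω → ℝ) (Y : Fin n → Fin l → Ω → ℝ)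
    (ω : Ω) : ℝ :=
  ∑ i, ∑ j, (V10B X Y i j ω - (∑ j', V10B X Y i j' ω) / k) ^ 2 / ((m : ℝ) * ((k : ℝ) - 1))

/-- `(S⁰¹)²` for BRSS data. -/
def S01sqB {m n k l : ℕ} (X : Fin m → Fin k → Ω → ℝ) (Y : Fin n → Fin l → Ω → ℝ)
    (ω : Ω) : ℝ :=
  ∑ r, ∑ s, (V01B X Y r s ω - (∑ s', V01B X Y r s' ω) / l) ^ 2 / ((n : ℝ) * ((l : ℝ) - 1))

/-- Pooled variance estimator `S²` for BRSS data. -/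
def S2B {m n k l : ℕ} (X : Fin m → Fin k → Ω → ℝ) (Y : Fin n → Fin l → Ω → ℝ)
    (ω : Ω) : ℝ :=
  ((n * l : ℝ) * S10sqB X Y ω + (m * k : ℝ) * S01sqB X Y ω) / ((m * k : ℝ) + (n * l : ℝ))

/-- Mann–Whitney statistic for URSS data. -/
def deltaHatU {m n : ℕ} {k : Fin m → ℕ} {l : Fin n → ℕ}
    (X : ∀ i, Fin (k i) → Ω → ℝ) (Y : ∀ r, Fin (l r) → Ω → ℝ) (ω : Ω) : ℝ :=
  ∑ i, ∑ j, ∑ r, ∑ s, phi (X i j ω) (Y r s ω) / (m * k i * n * l r)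

/-- Estimated placement value `Û_{rs}` for URSS data. -/
def UhatU {m n : ℕ} {k : Fin m → ℕ} {l : Fin n → ℕ}
    (X : ∀ i, Fin (k i) → Ω → ℝ) (Y : ∀ r, Fin (l r) → Ω → ℝ)
    (r : Fin n) (s : Fin (l r)) (ω : Ω) : ℝ :=
  1 - ∑ i, ∑ j, phi (X i j ω) (Y r s ω) / (m * k i)

/-- `V¹⁰(X_{[i]j})` for URSS data. -/
def V10U {m n : ℕ} {k : Fin m → ℕ} {l : Fin n → ℕ}
    (X : ∀ i, Fin (k i) → Ω → ℝ) (Y : ∀ r, Fin (l r) → Ω → ℝ)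
    (i : Fin m) (j : Fin (k i)) (ω : Ω) : ℝ :=
  ∑ r, ∑ s, phi (X i j ω) (Y r s ω) / (n * l r)

/-- `V⁰¹(Y_{[r]s})` for URSS data. -/
def V01U {m n : ℕ} {k : Fin m → ℕ} {l : Fin n → ℕ}
    (X : ∀ i, Fin (k i) → Ω → ℝ) (Y : ∀ r, Fin (l r) → Ω → ℝ)
    (r : Fin n) (s : Fin (l r)) (ω : Ω) : ℝ :=
  ∑ i, ∑ j, phi (X i j ω) (Y r s ω) / (m * k i)

/-- `(S¹⁰)²` for URSS data. -/
def S10sqU {m n : ℕ} {k : Fin m → ℕ} {l : Fin n → ℕ}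
    (X : ∀ i, Fin (k i) → Ω → ℝ) (Y : ∀ r, Fin (l r) → Ω → ℝ) (ω : Ω) : ℝ :=
  ∑ i, ∑ j, (V10U X Y i j ω - (∑ j', V10U X Y i j' ω) / (k i)) ^ 2 /
    ((m : ℝ) * ((k i : ℝ) - 1))

/-- `(S⁰¹)²` for URSS data. -/
def S01sqU {m n : ℕ} {k : Fin m → ℕ} {l : Fin n → ℕ}
    (X : ∀ i, Fin (k i) → Ω → ℝ) (Y : ∀ r, Fin (l r) → Ω → ℝ) (ω : Ω) : ℝ :=
  ∑ r, ∑ s, (V01U X Y r s ω - (∑ s', V01U X Y r s' ω) / (l r)) ^ 2 /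
    ((n : ℝ) * ((l r : ℝ) - 1))

/-- Pooled variance estimator `S²` for URSS data, where `n_x = ∑ᵢ kᵢ` and `n_y = ∑ᵣ lᵣ`. -/
def S2U {m n : ℕ} {k : Fin m → ℕ} {l : Fin n → ℕ}
    (X : ∀ i, Fin (k i) → Ω → ℝ) (Y : ∀ r, Fin (l r) → Ω → ℝ) (ω : Ω) : ℝ :=
  ((∑ r, (l r : ℝ)) * S10sqU X Y ω + (∑ i, (k i : ℝ)) * S01sqU X Y ω) /
    ((∑ i, (k i : ℝ)) + (∑ r, (l r : ℝ)))

/-- Convergence in distribution of a sequence of real random variables on `(Ω, P)`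
to a limiting distribution `μ` on `ℝ`: integrals of every bounded continuous function
converge. -/
def TendstoInDistribution (P : Measure Ω) (Z : ℕ → Ω → ℝ) (μ : Measure ℝ) : Prop :=
  ∀ f : ℝ →ᵇ ℝ, Tendsto (fun t => ∫ ω, f (Z t ω) ∂P) atTop (𝓝 (∫ x, f x ∂μ))

/-- Convergence in probability of a sequence of real random variables to a constant. -/
def TendstoInProbability (P : Measure Ω) (Z : ℕ → Ω → ℝ) (c : ℝ) : Prop :=
  ∀ ε > 0, Tendsto (fun t => (P {ω | ε ≤ |Z t ω - c|}).toReal) atTop (𝓝 0)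

/-- `Z t = O_p(a t)`: stochastic boundedness at rate `a`. -/
def IsBigOp (P : Measure Ω) (Z : ℕ → Ω → ℝ) (a : ℕ → ℝ) : Prop :=
  ∀ ε > 0, ∃ M : ℝ, ∀ᶠ t in atTop, (P {ω | M * a t < |Z t ω|}).toReal < ε

/-- The chi-square distribution with one degree of freedom (the gamma distribution with
shape `1/2` and rate `1/2`). -/
def chiSq1 : Measure ℝ := gammaMeasure (1 / 2) (1 / 2)

/-- The standard normal distribution `N(0,1)`. -/
def stdNormal : Measure ℝ := gaussianReal 0 1


/-- `β = ∫ (1 − G(x))² dF(x)`, with `μ` the measure of the non-diseased population. -/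
def betaInt (μ : Measure ℝ) (G : ℝ → ℝ) : ℝ := ∫ x, (1 - G x) ^ 2 ∂μ

/-- `α = ∫ F(x)² dG(x)`, with `ν` the measure of the diseased population. -/
def alphaInt (ν : Measure ℝ) (F : ℝ → ℝ) : ℝ := ∫ x, F x ^ 2 ∂ν

/-- `β̄ = ∫ (1/n) ∑ᵣ (1 − G_{[r]}(x))² dF(x)`. -/
def betaBarInt {n : ℕ} (μ : Measure ℝ) (Gr : Fin n → ℝ → ℝ) : ℝ :=
  ∫ x, (∑ r, (1 - Gr r x) ^ 2) / n ∂μ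

/-- `ᾱ = ∫ (1/m) ∑ᵢ F_{[i]}(x)² dG(x)`. -/
def alphaBarInt {m : ℕ} (ν : Measure ℝ) (Fi : Fin m → ℝ → ℝ) : ℝ :=
  ∫ x, (∑ i, Fi i x ^ 2) / m ∂ν

/-- `δ̄₀² = (1/(mn)) ∑ᵢ ∑ᵣ δ̄_{ir}²` where `δ̄_{ir} = P(X_{[i]1} < Y_{[r]1})`,
given the stratum distributions `μi i` of `X_{[i]1}` and `νr r` of `Y_{[r]1}`. -/
def deltaBar0sq {m n : ℕ} (μi : Fin m → Measure ℝ) (νr : Fin n → Measure ℝ) : ℝ :=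
  (∑ i, ∑ r, probLT (μi i) (νr r) ^ 2) / (m * n)

/-- `φ₁₀(x) = (1/(nl)) ∑_{r,s} E[φ(x, Y_{[r]s})]`. -/
def phi10B (P : Measure Ω) {n l : ℕ} (Y : Fin n → Fin l → Ω → ℝ) (x : ℝ) : ℝ :=
  (∑ r, ∑ s, ∫ ω, phi x (Y r s ω) ∂P) / (n * l)

/-- `φ₀₁(y) = (1/(mk)) ∑_{i,j} E[φ(X_{[i]j}, y)]`. -/
def phi01B (P : Measure Ω) {m k : ℕ} (X : Fin m → Fin k → Ω → ℝ) (y : ℝ) : ℝ :=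
  (∑ i, ∑ j, ∫ ω, phi (X i j ω) y ∂P) / (m * k)

/-- Deterministic (data-level) estimated placement value `Û_{rs}` for balanced data. -/
def UhatD {m n k l : ℕ} (X : Fin m → Fin k → ℝ) (Y : Fin n → Fin l → ℝ)
    (r : Fin n) (s : Fin l) : ℝ :=
  1 - (∑ i, ∑ j, phi (X i j) (Y r s)) / (m * k)

/-- Deterministic (data-level) Mann–Whitney statistic for balanced data. -/
def deltaHatD {m n k l : ℕ} (X : Fin m → Fin k → ℝ) (Y : Fin n → Fin l → ℝ) : ℝ :=
  (∑ i, ∑ j, ∑ r, ∑ s, phi (X i j) (Y r s)) / (m * k * n * l)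

/-- Deterministic (data-level) estimated placement value `Û_{rs}` for unbalanced data. -/
def UhatUD {m n : ℕ} {k : Fin m → ℕ} {l : Fin n → ℕ}
    (X : ∀ i, Fin (k i) → ℝ) (Y : ∀ r, Fin (l r) → ℝ) (r : Fin n) (s : Fin (l r)) : ℝ :=
  1 - ∑ i, ∑ j, phi (X i j) (Y r s) / (m * k i)

/-- Deterministic (data-level) Mann–Whitney statistic for unbalanced data. -/
def deltaHatUD {m n : ℕ} {k : Fin m → ℕ} {l : Fin n → ℕ}
    (X : ∀ i, Fin (k i) → ℝ) (Y : ∀ r, Fin (l r) → ℝ) : ℝ :=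
  ∑ i, ∑ j, ∑ r, ∑ s, phi (X i j) (Y r s) / (m * k i * n * l r)

/-- Estimated placement value `Ŵ_{ij} = (1/(nl)) ∑_{r,s} φ(Y_{[r]s}, X_{[i]j})` of `X`
(the diseased distribution `G` as reference). -/
def WhatB {m n k l : ℕ} (X : Fin m → Fin k → Ω → ℝ) (Y : Fin n → Fin l → Ω → ℝ)
    (i : Fin m) (j : Fin k) (ω : Ω) : ℝ :=
  (∑ r, ∑ s, phi (Y r s ω) (X i j ω)) / (n * l)


section AuxProofs

lemma phi_sq (x y : ℝ) : phi x y ^ 2 = phi x y := by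
  unfold phi; split_ifs <;> norm_num

lemma phi_abs_le (x y : ℝ) : |phi x y| ≤ 1 := by
  unfold phi; split_ifs <;> norm_num

lemma cdfM_nonneg (ρ : Measure ℝ) (t : ℝ) : 0 ≤ cdfM ρ t := ENNReal.toReal_nonneg

lemma cdfM_le_one (ρ : Measure ℝ) [IsProbabilityMeasure ρ] (t : ℝ) : cdfM ρ t ≤ 1 := by
  have h := prob_le_one (μ := ρ) (s := Set.Iic t)
  simpa [cdfM] using ENNReal.toReal_mono (by simp) h

lemma cdfM_mono (ρ : Measure ℝ) [IsProbabilityMeasure ρ] : Monotone (cdfM ρ) :=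
  fun a b hab => ENNReal.toReal_mono (measure_ne_top _ _)
    (measure_mono (Set.Iic_subset_Iic.2 hab))

lemma cdfM_measurable (ρ : Measure ℝ) [IsProbabilityMeasure ρ] : Measurable (cdfM ρ) :=
  (cdfM_mono ρ).measurable

lemma measure_Ioi_toReal (σ : Measure ℝ) [IsProbabilityMeasure σ] (t : ℝ) :
    (σ (Set.Ioi t)).toReal = 1 - cdfM σ t := by
  have h : σ (Set.Ioi t) = 1 - σ (Set.Iic t) := by
    rw [← Set.compl_Iic, measure_compl measurableSet_Iic (measure_ne_top _ _), measure_univ]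
  rw [h, cdfM, ENNReal.toReal_sub_of_le (prob_le_one) (by simp)]
  simp

lemma measure_Iio_toReal (ρ : Measure ℝ) [IsProbabilityMeasure ρ] (hρ : ∀ t, ρ {t} = 0)
    (t : ℝ) : (ρ (Set.Iio t)).toReal = cdfM ρ t := by
  have h : ρ (Set.Iic t) = ρ (Set.Iio t) := by
    rw [← Set.Iio_union_right, measure_union (by simp) (measurableSet_singleton t), hρ t,
      add_zero]
  rw [cdfM, h]

lemma atomless_of_contCdf (ρ : Measure ℝ) [IsProbabilityMeasure ρ]
    (h : Continuous (cdfM ρ)) (t : ℝ) : ρ {t} = 0 := by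
  have hcdf : ∀ x, cdf ρ x = cdfM ρ x := fun x => cdf_eq_real ρ x
  have hρeq : (cdf ρ).measure = ρ := measure_cdf ρ
  rw [← hρeq, StieltjesFunction.measure_singleton]
  have hll : Function.leftLim (cdf ρ) t = cdf ρ t := by
    apply leftLim_eq_of_tendsto
    have : Tendsto (cdfM ρ) (nhdsWithin t (Set.Iio t)) (nhds (cdfM ρ t)) :=
      (h.tendsto t).mono_left nhdsWithin_le_nhds
    simp only [funext hcdf]
    simpa [hcdf t] using this
  rw [hll, sub_self, ENNReal.ofReal_zero]


lemma measurableSet_ltSet : MeasurableSet {p : ℝ × ℝ | p.1 < p.2} :=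
  measurableSet_lt measurable_fst measurable_snd

lemma probLT_nonneg (ρ σ : Measure ℝ) : 0 ≤ probLT ρ σ := ENNReal.toReal_nonneg

lemma probLT_le_one (ρ σ : Measure ℝ) [IsProbabilityMeasure ρ] [IsProbabilityMeasure σ] :
    probLT ρ σ ≤ 1 := by
  have h := prob_le_one (μ := ρ.prod σ) (s := {p : ℝ × ℝ | p.1 < p.2})
  simpa [probLT] using ENNReal.toReal_mono (by simp) h

lemma probLT_eq_right (ρ σ : Measure ℝ) [IsProbabilityMeasure ρ] [IsProbabilityMeasure σ] :
    probLT ρ σ = ∫ x, (σ (Set.Ioi x)).toReal ∂ρ := by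
  have h1 : (ρ.prod σ) {p : ℝ × ℝ | p.1 < p.2} = ∫⁻ x, σ (Set.Ioi x) ∂ρ := by
    rw [Measure.prod_apply measurableSet_ltSet]; rfl
  have hmeas : Measurable fun x => σ (Set.Ioi x) :=
    measurable_measure_prodMk_left (ν := σ) measurableSet_ltSet
  rw [probLT, h1,
    ← integral_toReal hmeas.aemeasurable (ae_of_all _ fun x => measure_lt_top σ _)]

lemma probLT_eq_left (ρ σ : Measure ℝ) [IsProbabilityMeasure ρ] [IsProbabilityMeasure σ] :
    probLT ρ σ = ∫ y, (ρ (Set.Iio y)).toReal ∂σ := by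
  have h1 : (ρ.prod σ) {p : ℝ × ℝ | p.1 < p.2} = ∫⁻ y, ρ (Set.Iio y) ∂σ := by
    rw [Measure.prod_apply_symm measurableSet_ltSet]; rfl
  have hmeas : Measurable fun y => ρ (Set.Iio y) :=
    measurable_measure_prodMk_right (μ := ρ) measurableSet_ltSet
  rw [probLT, h1,
    ← integral_toReal hmeas.aemeasurable (ae_of_all _ fun y => measure_lt_top ρ _)]

lemma phi_integral_right (σ : Measure ℝ) [IsProbabilityMeasure σ] (x : ℝ) :
    ∫ y, phi x y ∂σ = (σ (Set.Ioi x)).toReal := by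
  have h : (fun y => phi x y) = (Set.Ioi x).indicator (fun _ => (1 : ℝ)) := by
    ext y; simp [phi, Set.indicator_apply, Set.mem_Ioi]
  rw [h, integral_indicator_const _ measurableSet_Ioi, smul_eq_mul, mul_one]
  rfl

lemma phi_integral_left (ρ : Measure ℝ) [IsProbabilityMeasure ρ] (y : ℝ) :
    ∫ x, phi x y ∂ρ = (ρ (Set.Iio y)).toReal := by
  have h : (fun x => phi x y) = (Set.Iio y).indicator (fun _ => (1 : ℝ)) := by
    ext x; simp [phi, Set.indicator_apply, Set.mem_Iio]
  rw [h, integral_indicator_const _ measurableSet_Iio, smul_eq_mul, mul_one]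
  rfl

lemma phi_integral_prod (ρ σ : Measure ℝ) [IsProbabilityMeasure ρ] [IsProbabilityMeasure σ] :
    ∫ p, phi p.1 p.2 ∂(ρ.prod σ) = probLT ρ σ := by
  have h : (fun p : ℝ × ℝ => phi p.1 p.2)
      = ({p : ℝ × ℝ | p.1 < p.2}).indicator (fun _ => (1 : ℝ)) := by
    ext p; simp [phi, Set.indicator_apply]
  rw [h, integral_indicator_const _ measurableSet_ltSet, smul_eq_mul, mul_one, probLT]
  rfl

lemma phi_measurable : Measurable fun p : ℝ × ℝ => phi p.1 p.2 := by
  have h : (fun p : ℝ × ℝ => phi p.1 p.2)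
      = ({p : ℝ × ℝ | p.1 < p.2}).indicator (fun _ => (1 : ℝ)) := by
    ext p; simp [phi, Set.indicator_apply]
  rw [h]
  exact measurable_const.indicator measurableSet_ltSet

lemma integrable_of_bdd {α : Type*} {mα : MeasurableSpace α} {μ : Measure α}
    [IsFiniteMeasure μ] {f : α → ℝ} (hf : Measurable f) {C : ℝ} (h : ∀ x, |f x| ≤ C) :
    Integrable f μ :=
  (integrable_const C).mono' hf.aestronglyMeasurable
    (ae_of_all _ fun x => by simpa [Real.norm_eq_abs] using h x)

/-- `∫ (f + c)² = ∫ f² + 2c ∫ f + c²` over a probability measure. -/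
lemma integral_sq_add {μ : Measure ℝ} [IsProbabilityMeasure μ] {f : ℝ → ℝ}
    (hm : Measurable f) (hb : ∀ t, |f t| ≤ 1) (c : ℝ) :
    ∫ t, (f t + c) ^ 2 ∂μ = (∫ t, f t ^ 2 ∂μ) + 2 * c * (∫ t, f t ∂μ) + c ^ 2 := by
  have hf : Integrable f μ := integrable_of_bdd hm hb
  have hf2 : Integrable (fun t => f t ^ 2) μ :=
    integrable_of_bdd (C := 1) (hm.pow_const 2) (fun t => by
      have h := hb t; have h0 := abs_nonneg (f t)
      rw [abs_pow]; nlinarith)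
  have h1 : ∀ t, (f t + c) ^ 2 = (f t ^ 2 + 2 * c * f t) + c ^ 2 := fun t => by ring
  have e1 : ∫ t, ((f t ^ 2 + 2 * c * f t) + c ^ 2) ∂μ
      = (∫ t, (f t ^ 2 + 2 * c * f t) ∂μ) + ∫ _t, (c ^ 2 : ℝ) ∂μ :=
    integral_add (hf2.add (hf.const_mul (2 * c))) (integrable_const _)
  have e2 : ∫ t, (f t ^ 2 + 2 * c * f t) ∂μ
      = (∫ t, f t ^ 2 ∂μ) + ∫ t, 2 * c * f t ∂μ := integral_add hf2 (hf.const_mul (2 * c))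
  rw [funext h1, e1, e2, integral_const_mul, integral_const]
  simp [measure_univ]

/-- Jensen: `(∫ f)² ≤ ∫ f²` over a probability measure. -/
lemma sq_integral_le {μ : Measure ℝ} [IsProbabilityMeasure μ] {f : ℝ → ℝ}
    (hm : Measurable f) (hb : ∀ t, |f t| ≤ 1) :
    (∫ t, f t ∂μ) ^ 2 ≤ ∫ t, f t ^ 2 ∂μ := by
  have h0 : 0 ≤ ∫ t, (f t + -(∫ t, f t ∂μ)) ^ 2 ∂μ := integral_nonneg fun t => sq_nonneg _
  rw [integral_sq_add hm hb] at h0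
  nlinarith [h0]

variable {ρ σ : Measure ℝ} [IsProbabilityMeasure ρ] [IsProbabilityMeasure σ]

lemma pair_A (hρ : ∀ t, ρ {t} = 0) : probLT ρ σ = ∫ y, cdfM ρ y ∂σ := by
  rw [probLT_eq_left ρ σ]
  exact integral_congr_ae (ae_of_all _ fun y => measure_Iio_toReal ρ hρ y)

lemma pair_B : probLT ρ σ = ∫ x, (1 - cdfM σ x) ∂ρ := by
  rw [probLT_eq_right ρ σ]
  exact integral_congr_ae (ae_of_all _ fun x => measure_Ioi_toReal σ x)

lemma cdfM_abs_le (ρ : Measure ℝ) [IsProbabilityMeasure ρ] (t : ℝ) : |cdfM ρ t| ≤ 1 :=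
  abs_le.2 ⟨by linarith [cdfM_nonneg ρ t], cdfM_le_one ρ t⟩

lemma one_sub_cdfM_abs_le (σ : Measure ℝ) [IsProbabilityMeasure σ] (t : ℝ) :
    |1 - cdfM σ t| ≤ 1 :=
  abs_le.2 ⟨by linarith [cdfM_le_one σ t], by linarith [cdfM_nonneg σ t]⟩

lemma pair_C (hρ : ∀ t, ρ {t} = 0) : probLT ρ σ ^ 2 ≤ ∫ y, cdfM ρ y ^ 2 ∂σ := by
  rw [pair_A (σ := σ) hρ]
  exact sq_integral_le (cdfM_measurable ρ) (cdfM_abs_le ρ)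

lemma pair_D : probLT ρ σ ^ 2 ≤ ∫ x, (1 - cdfM σ x) ^ 2 ∂ρ := by
  rw [pair_B (ρ := ρ) (σ := σ)]
  exact sq_integral_le (measurable_const.sub (cdfM_measurable σ)) (one_sub_cdfM_abs_le σ)

lemma pair_E (hρ : ∀ t, ρ {t} = 0) :
    (∫ y, cdfM ρ y ^ 2 ∂σ) + (∫ x, (1 - cdfM σ x) ^ 2 ∂ρ)
      ≤ probLT ρ σ + probLT ρ σ ^ 2 := by
  set f : ℝ → ℝ := fun t => cdfM ρ t with hfdef
  set g : ℝ → ℝ := fun t => 1 - cdfM σ t with hgdef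
  set d : ℝ := probLT ρ σ with hddef
  have hfm : Measurable f := cdfM_measurable ρ
  have hgm : Measurable g := measurable_const.sub (cdfM_measurable σ)
  have hfb : ∀ t, |f t| ≤ 1 := cdfM_abs_le ρ
  have hgb : ∀ t, |g t| ≤ 1 := one_sub_cdfM_abs_le σ
  have hd0 : 0 ≤ d := probLT_nonneg ρ σ
  have hd1 : d ≤ 1 := probLT_le_one ρ σ
  have hA : d = ∫ y, f y ∂σ := pair_A hρ
  have hB : d = ∫ x, g x ∂ρ := pair_B
  set A : ℝ := ∫ y, f y ^ 2 ∂σ with hAdef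
  set B : ℝ := ∫ x, g x ^ 2 ∂ρ with hBdef
  -- measurable pieces on the product
  have hφm : Measurable fun p : ℝ × ℝ => phi p.1 p.2 := phi_measurable
  have hg1m : Measurable fun p : ℝ × ℝ => g p.1 := hgm.comp measurable_fst
  have hf2m : Measurable fun p : ℝ × ℝ => f p.2 := hfm.comp measurable_snd
  -- integrable pieces
  have hintφ : Integrable (fun p : ℝ × ℝ => phi p.1 p.2) (ρ.prod σ) :=
    integrable_of_bdd hφm (fun p => phi_abs_le _ _)
  have hintφg : Integrable (fun p : ℝ × ℝ => phi p.1 p.2 * g p.1) (ρ.prod σ) :=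
    integrable_of_bdd (C := 1) (hφm.mul hg1m) (fun p => by
      rw [abs_mul]
      calc |phi p.1 p.2| * |g p.1| ≤ 1 * 1 :=
        mul_le_mul (phi_abs_le _ _) (hgb _) (abs_nonneg _) zero_le_one
      _ = 1 := by norm_num)
  have hintφf : Integrable (fun p : ℝ × ℝ => phi p.1 p.2 * f p.2) (ρ.prod σ) :=
    integrable_of_bdd (C := 1) (hφm.mul hf2m) (fun p => by
      rw [abs_mul]
      calc |phi p.1 p.2| * |f p.2| ≤ 1 * 1 :=
        mul_le_mul (phi_abs_le _ _) (hfb _) (abs_nonneg _) zero_le_one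
      _ = 1 := by norm_num)
  have hintK2 : Integrable (fun p : ℝ × ℝ => (g p.1 + f p.2 - d) ^ 2) (ρ.prod σ) :=
    integrable_of_bdd (C := 9) (((hg1m.add hf2m).sub measurable_const).pow_const 2)
      (fun p => by
        have h1 := abs_le.1 (hgb p.1); have h2 := abs_le.1 (hfb p.2)
        rw [abs_pow, show (9:ℝ) = 3 ^ 2 by norm_num]
        gcongr
        exact abs_le.2 ⟨by linarith, by linarith⟩)
  -- the elementary product integrals
  have I1 : ∫ p, phi p.1 p.2 ∂(ρ.prod σ) = d := phi_integral_prod ρ σ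
  have I2 : ∫ p, phi p.1 p.2 * g p.1 ∂(ρ.prod σ) = B := by
    rw [MeasureTheory.integral_prod _ hintφg]
    rw [hBdef]
    refine integral_congr_ae (ae_of_all _ fun x => ?_)
    show ∫ y, phi x y * g x ∂σ = g x ^ 2
    rw [MeasureTheory.integral_mul_const, phi_integral_right σ x, measure_Ioi_toReal σ x]
    show (1 - cdfM σ x) * g x = g x ^ 2
    rw [hgdef]; ring
  have I3 : ∫ p, phi p.1 p.2 * f p.2 ∂(ρ.prod σ) = A := by
    rw [MeasureTheory.integral_prod_symm _ hintφf]
    rw [hAdef]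
    refine integral_congr_ae (ae_of_all _ fun y => ?_)
    show ∫ x, phi x y * f y ∂ρ = f y ^ 2
    rw [MeasureTheory.integral_mul_const, phi_integral_left ρ y, measure_Iio_toReal ρ hρ y]
    show cdfM ρ y * f y = f y ^ 2
    rw [hfdef]; ring
  have I4 : ∫ p, (g p.1 + f p.2 - d) ^ 2 ∂(ρ.prod σ) = A + B - d ^ 2 := by
    rw [MeasureTheory.integral_prod _ hintK2]
    have inner : ∀ x, ∫ y, (g x + f y - d) ^ 2 ∂σ = g x ^ 2 + (A - d ^ 2) := by
      intro x
      have e : ∀ y, (g x + f y - d) ^ 2 = (f y + (g x - d)) ^ 2 := fun y => by ring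
      rw [funext e, integral_sq_add hfm hfb (g x - d), ← hA, ← hAdef]
      ring
    have hintg2 : Integrable (fun x => g x ^ 2) ρ :=
      integrable_of_bdd (C := 1) (hgm.pow_const 2) (fun t => by
        have h := hgb t; have h0 := abs_nonneg (g t)
        rw [abs_pow]; nlinarith)
    calc ∫ x, (∫ y, (g x + f y - d) ^ 2 ∂σ) ∂ρ
        = ∫ x, (g x ^ 2 + (A - d ^ 2)) ∂ρ :=
          integral_congr_ae (ae_of_all _ fun x => inner x)
      _ = (∫ x, g x ^ 2 ∂ρ) + (A - d ^ 2) := by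
          rw [integral_add hintg2 (integrable_const _), integral_const]; simp
      _ = A + B - d ^ 2 := by rw [← hBdef]; ring
  -- nonnegativity of the squared projection residual
  have hN : 0 ≤ ∫ p, (phi p.1 p.2 - g p.1 - f p.2 + d) ^ 2 ∂(ρ.prod σ) :=
    integral_nonneg fun p => sq_nonneg _
  have hpt : ∀ p : ℝ × ℝ, (phi p.1 p.2 - g p.1 - f p.2 + d) ^ 2
      = (phi p.1 p.2 - 2 * (phi p.1 p.2 * g p.1) - 2 * (phi p.1 p.2 * f p.2)
          + (2 * d) * phi p.1 p.2) + (g p.1 + f p.2 - d) ^ 2 := by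
    intro p; linear_combination phi_sq p.1 p.2
  have hQ1 : Integrable (fun p : ℝ × ℝ => phi p.1 p.2 - 2 * (phi p.1 p.2 * g p.1))
      (ρ.prod σ) := hintφ.sub (hintφg.const_mul 2)
  have hQ2 : Integrable (fun p : ℝ × ℝ =>
      phi p.1 p.2 - 2 * (phi p.1 p.2 * g p.1) - 2 * (phi p.1 p.2 * f p.2)) (ρ.prod σ) :=
    hQ1.sub (hintφf.const_mul 2)
  have hQ3 : Integrable (fun p : ℝ × ℝ =>
      phi p.1 p.2 - 2 * (phi p.1 p.2 * g p.1) - 2 * (phi p.1 p.2 * f p.2)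
        + (2 * d) * phi p.1 p.2) (ρ.prod σ) := hQ2.add (hintφ.const_mul (2 * d))
  rw [funext hpt, integral_add hQ3 hintK2, integral_add hQ2 (hintφ.const_mul (2 * d)),
    integral_sub hQ1 (hintφf.const_mul 2), integral_sub hintφ (hintφg.const_mul 2),
    MeasureTheory.integral_const_mul, MeasureTheory.integral_const_mul,
    MeasureTheory.integral_const_mul, I1, I2, I3, I4] at hN
  nlinarith [hN]

lemma sq_abs_le_one {x : ℝ} (h : |x| ≤ 1) : |x ^ 2| ≤ 1 := by
  have h0 := abs_nonneg x
  rw [abs_pow]; nlinarith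

lemma sum_measure_eq {m : ℕ} (ρ : Measure ℝ) [IsProbabilityMeasure ρ]
    (ρi : Fin m → Measure ℝ) [∀ i, IsProbabilityMeasure (ρi i)]
    (h : ∀ t, (∑ i, cdfM (ρi i) t) = m * cdfM ρ t) :
    (∑ i, ρi i) = (m : ENNReal) • ρ := by
  have hfin : IsFiniteMeasure (∑ i, ρi i) := by
    constructor
    rw [Measure.finset_sum_apply]
    simp [measure_univ]
  refine Measure.ext_of_Iic _ _ fun a => ?_
  rw [Measure.finset_sum_apply, Measure.smul_apply, smul_eq_mul]
  have e1 : ∀ i : Fin m, ρi i (Set.Iic a) = ENNReal.ofReal (cdfM (ρi i) a) := fun i =>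
    (ENNReal.ofReal_toReal (measure_ne_top _ _)).symm
  have e2 : ρ (Set.Iic a) = ENNReal.ofReal (cdfM ρ a) :=
    (ENNReal.ofReal_toReal (measure_ne_top _ _)).symm
  rw [Finset.sum_congr rfl (fun i _ => e1 i), e2,
    ← ENNReal.ofReal_sum_of_nonneg (fun i _ => cdfM_nonneg _ _), h a,
    ENNReal.ofReal_mul (by positivity), ENNReal.ofReal_natCast]

lemma atomless_component {m : ℕ} (ρ : Measure ℝ)
    (ρi : Fin m → Measure ℝ)
    (hsum : (∑ i, ρi i) = (m : ENNReal) • ρ) (hρ : ∀ t, ρ {t} = 0) (i : Fin m) (t : ℝ) :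
    ρi i {t} = 0 := by
  have h1 : (∑ j, ρi j) {t} = 0 := by
    rw [hsum, Measure.smul_apply, hρ t, smul_eq_mul, mul_zero]
  rw [Measure.finset_sum_apply] at h1
  exact le_antisymm
    (le_trans (Finset.single_le_sum (f := fun j => ρi j {t}) (fun j _ => zero_le)
      (Finset.mem_univ i)) h1.le)
    (zero_le)

lemma integral_sum_meas {m : ℕ} (ρ : Measure ℝ) [IsProbabilityMeasure ρ]
    (ρi : Fin m → Measure ℝ) [∀ i, IsProbabilityMeasure (ρi i)]
    (hsum : (∑ i, ρi i) = (m : ENNReal) • ρ) {h : ℝ → ℝ} (hm : Measurable h) {C : ℝ}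
    (hb : ∀ t, |h t| ≤ C) :
    (∑ i, ∫ t, h t ∂(ρi i)) = m * ∫ t, h t ∂ρ := by
  rw [← integral_finset_sum_measure (fun i _ => integrable_of_bdd hm hb), hsum,
    integral_smul_measure]
  simp

theorem main_bounds {m n : ℕ} (hm1 : 1 ≤ m) (hn1 : 1 ≤ n)
    (F G : ℝ → ℝ) (Fi : Fin m → ℝ → ℝ) (Gr : Fin n → ℝ → ℝ)
    (hFcont : Continuous F)
    (μ ν : Measure ℝ) [IsProbabilityMeasure μ] [IsProbabilityMeasure ν]
    (hμ : ∀ t, cdfM μ t = F t) (hν : ∀ t, cdfM ν t = G t)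
    (μi : Fin m → Measure ℝ) [∀ i, IsProbabilityMeasure (μi i)]
    (hμi : ∀ i t, cdfM (μi i) t = Fi i t)
    (νr : Fin n → Measure ℝ) [∀ r, IsProbabilityMeasure (νr r)]
    (hνr : ∀ r t, cdfM (νr r) t = Gr r t)
    (hFavg : ∀ t, F t = (∑ i, Fi i t) / m) (hGavg : ∀ t, G t = (∑ r, Gr r t) / n)
    (δ₀ : ℝ) (hδ₀ : δ₀ = probLT μ ν)
    (A B D2 : ℝ)
    (hA : A = (∫ x, ((∑ i, Fi i x ^ 2) / m : ℝ) ∂ν))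
    (hB : B = (∫ x, ((∑ r, (1 - Gr r x) ^ 2) / n : ℝ) ∂μ))
    (hD2 : D2 = (∑ i, ∑ r, probLT (μi i) (νr r) ^ 2) / (m * n)) :
    0 ≤ (A - D2) + (B - D2) ∧ (A - D2) + (B - D2) ≤ δ₀ - D2 := by
  have hm0 : (0 : ℝ) < m := by exact_mod_cast Nat.lt_of_lt_of_le Nat.zero_lt_one hm1
  have hn0 : (0 : ℝ) < n := by exact_mod_cast Nat.lt_of_lt_of_le Nat.zero_lt_one hn1
  have hFi : ∀ i, Fi i = cdfM (μi i) := fun i => (funext (hμi i)).symm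
  have hGr : ∀ r, Gr r = cdfM (νr r) := fun r => (funext (hνr r)).symm
  have hFμ : cdfM μ = F := funext hμ
  have hGν : cdfM ν = G := funext hν
  -- atomlessness
  have hμatom : ∀ t, μ {t} = 0 := atomless_of_contCdf μ (by rw [hFμ]; exact hFcont)
  have hsumμ : (∑ i, μi i) = (m : ENNReal) • μ := by
    refine sum_measure_eq μ μi fun t => ?_
    simp only [hμi, hμ]
    rw [hFavg t]; field_simp
  have hsumν : (∑ r, νr r) = (n : ENNReal) • ν := by
    refine sum_measure_eq ν νr fun t => ?_
    simp only [hνr, hν]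
    rw [hGavg t]; field_simp
  have hμiatom : ∀ i t, μi i {t} = 0 := fun i t =>
    atomless_component μ μi hsumμ hμatom i t
  -- basic bounds and measurability
  have hFim : ∀ i, Measurable (Fi i) := fun i => (hFi i) ▸ cdfM_measurable (μi i)
  have hGrm : ∀ r, Measurable fun x => 1 - Gr r x := fun r =>
    measurable_const.sub ((hGr r) ▸ cdfM_measurable (νr r))
  have hFib : ∀ i t, |Fi i t| ≤ 1 := fun i t => (hFi i) ▸ cdfM_abs_le (μi i) t
  have hGrb : ∀ r t, |1 - Gr r t| ≤ 1 := fun r t => by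
    rw [hGr r]; exact one_sub_cdfM_abs_le (νr r) t
  -- decomposition of A
  set M : ℝ := (m : ℝ) * (n : ℝ) with hM
  have hM0 : 0 < M := mul_pos hm0 hn0
  have hAeq : A = (∑ i, ∑ r, ∫ y, Fi i y ^ 2 ∂(νr r)) / M := by
    have int1 : ∀ i, Integrable (fun x => Fi i x ^ 2) ν :=
      fun i => integrable_of_bdd (C := 1) ((hFim i).pow_const 2)
        (fun t => sq_abs_le_one (hFib i t))
    have e1 : ∀ i : Fin m, (∑ r, ∫ y, Fi i y ^ 2 ∂(νr r)) = n * ∫ y, Fi i y ^ 2 ∂ν :=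
      fun i => integral_sum_meas ν νr hsumν ((hFim i).pow_const 2)
        (fun t => sq_abs_le_one (hFib i t))
    rw [hA, integral_div, integral_finset_sum _ (fun i _ => int1 i)]
    rw [Finset.sum_congr rfl fun i _ => e1 i, ← Finset.mul_sum, hM]
    field_simp
  have hBeq : B = (∑ i, ∑ r, ∫ x, (1 - Gr r x) ^ 2 ∂(μi i)) / M := by
    have int1 : ∀ r, Integrable (fun x => (1 - Gr r x) ^ 2) μ :=
      fun r => integrable_of_bdd (C := 1) ((hGrm r).pow_const 2)
        (fun t => sq_abs_le_one (hGrb r t))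
    have e1 : ∀ r : Fin n, (∑ i, ∫ x, ((1 - Gr r x : ℝ)) ^ 2 ∂(μi i))
        = (m : ℝ) * ∫ x, ((1 - Gr r x : ℝ)) ^ 2 ∂μ :=
      fun r => integral_sum_meas μ μi hsumμ ((hGrm r).pow_const 2)
        (fun t => sq_abs_le_one (hGrb r t))
    have key : ∀ r : Fin n, ∫ x, ((1 - Gr r x : ℝ)) ^ 2 ∂μ
        = (∑ i, ∫ x, ((1 - Gr r x : ℝ)) ^ 2 ∂(μi i)) / m := fun r => by
      rw [e1 r]; field_simp
    calc B = (∑ r, ∫ x, ((1 - Gr r x : ℝ)) ^ 2 ∂μ) / n := by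
          rw [hB, integral_div, integral_finset_sum _ (fun r _ => int1 r)]
      _ = (∑ r, (∑ i, ∫ x, ((1 - Gr r x : ℝ)) ^ 2 ∂(μi i)) / m) / n := by
          rw [Finset.sum_congr rfl fun r _ => key r]
      _ = (∑ r, ∑ i, ∫ x, ((1 - Gr r x : ℝ)) ^ 2 ∂(μi i)) / M := by
          rw [← Finset.sum_div, div_div, hM]
      _ = (∑ i, ∑ r, ∫ x, (1 - Gr r x) ^ 2 ∂(μi i)) / M := by
          rw [Finset.sum_comm]
  -- decomposition of δ₀
  have hδeq : δ₀ = (∑ i, ∑ r, probLT (μi i) (νr r)) / M := by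
    have step1 : ∀ r : Fin n, ∫ x, (1 - Gr r x) ∂μ = probLT μ (νr r) := fun r => by
      rw [pair_B (ρ := μ) (σ := νr r)]
      exact integral_congr_ae (ae_of_all _ fun x => by rw [hGr r])
    have step2 : ∀ r : Fin n, probLT μ (νr r) = (∑ i, probLT (μi i) (νr r)) / m := fun r => by
      rw [pair_A (σ := νr r) hμatom]
      have e : ∫ y, cdfM μ y ∂(νr r) = ∫ y, (∑ i, Fi i y) / (m : ℝ) ∂(νr r) :=
        integral_congr_ae (ae_of_all _ fun y => by rw [hFμ, hFavg y])
      rw [e, integral_div, integral_finset_sum _ (fun i _ =>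
        integrable_of_bdd (C := 1) (hFim i) (hFib i))]
      congr 1
      refine Finset.sum_congr rfl fun i _ => ?_
      rw [pair_A (ρ := μi i) (σ := νr r) (hμiatom i)]
      exact integral_congr_ae (ae_of_all _ fun y => by rw [hFi i])
    have base : δ₀ = (∑ r, ∫ x, (1 - Gr r x) ∂μ) / n := by
      rw [hδ₀, pair_B (ρ := μ) (σ := ν)]
      have e : ∫ x, (1 - cdfM ν x) ∂μ = ∫ x, (∑ r, (1 - Gr r x)) / (n : ℝ) ∂μ := by
        refine integral_congr_ae (ae_of_all _ fun x => ?_)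
        show (1 : ℝ) - cdfM ν x = (∑ r, (1 - Gr r x)) / (n : ℝ)
        rw [hν x, hGavg x, Finset.sum_sub_distrib, Finset.sum_const, Finset.card_univ,
          Fintype.card_fin, nsmul_eq_mul, mul_one]
        field_simp
      rw [e, integral_div, integral_finset_sum _ (fun r _ =>
        integrable_of_bdd (C := 1) (hGrm r) (hGrb r))]
    rw [base, Finset.sum_congr rfl fun r _ => (step1 r).trans (step2 r), ← Finset.sum_div,
      Finset.sum_comm, hM]
    field_simp
  -- pairwise inequalities
  have hD2eq : D2 = (∑ i, ∑ r, probLT (μi i) (νr r) ^ 2) / M := by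
    exact hD2
  have pairC : ∀ (i : Fin m) (r : Fin n),
      probLT (μi i) (νr r) ^ 2 ≤ ∫ y, Fi i y ^ 2 ∂(νr r) := fun i r => by
    have h := pair_C (ρ := μi i) (σ := νr r) (hμiatom i)
    refine le_trans h (le_of_eq ?_)
    exact integral_congr_ae (ae_of_all _ fun y => by rw [hFi i])
  have pairD : ∀ (i : Fin m) (r : Fin n),
      probLT (μi i) (νr r) ^ 2 ≤ ∫ x, (1 - Gr r x) ^ 2 ∂(μi i) := fun i r => by
    have h := pair_D (ρ := μi i) (σ := νr r)
    refine le_trans h (le_of_eq ?_)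
    exact integral_congr_ae (ae_of_all _ fun x => by rw [hGr r])
  have pairE : ∀ (i : Fin m) (r : Fin n),
      (∫ y, Fi i y ^ 2 ∂(νr r)) + (∫ x, (1 - Gr r x) ^ 2 ∂(μi i))
        ≤ probLT (μi i) (νr r) + probLT (μi i) (νr r) ^ 2 := fun i r => by
    have h := pair_E (ρ := μi i) (σ := νr r) (hμiatom i)
    have e1 : ∫ y, Fi i y ^ 2 ∂(νr r) = ∫ y, cdfM (μi i) y ^ 2 ∂(νr r) :=
      integral_congr_ae (ae_of_all _ fun y => by rw [hFi i])
    have e2 : ∫ x, (1 - Gr r x) ^ 2 ∂(μi i) = ∫ x, (1 - cdfM (νr r) x) ^ 2 ∂(μi i) :=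
      integral_congr_ae (ae_of_all _ fun x => by rw [hGr r])
    rw [e1, e2]; exact h
  -- sum them up
  set SA : ℝ := ∑ i, ∑ r, ∫ y, Fi i y ^ 2 ∂(νr r) with hSA
  set SB : ℝ := ∑ i, ∑ r, ∫ x, (1 - Gr r x) ^ 2 ∂(μi i) with hSB
  set SD : ℝ := ∑ i, ∑ r, probLT (μi i) (νr r) with hSD
  set SD2 : ℝ := ∑ i, ∑ r, probLT (μi i) (νr r) ^ 2 with hSD2
  have h1 : SD2 ≤ SA := Finset.sum_le_sum fun i _ => Finset.sum_le_sum fun r _ => pairC i r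
  have h2 : SD2 ≤ SB := Finset.sum_le_sum fun i _ => Finset.sum_le_sum fun r _ => pairD i r
  have h3 : SA + SB ≤ SD + SD2 := by
    have h := Finset.sum_le_sum (s := Finset.univ) fun (i : Fin m) _ =>
      Finset.sum_le_sum (s := Finset.univ) fun (r : Fin n) _ => pairE i r
    simpa [Finset.sum_add_distrib, hSA, hSB, hSD, hSD2] using h
  rw [hAeq, hBeq, hδeq, hD2eq]
  constructor
  · have c1 : SD2 / M ≤ SA / M := by gcongr
    have c2 : SD2 / M ≤ SB / M := by gcongr
    linarith
  · have c3 : (SA + SB) / M ≤ (SD + SD2) / M := by gcongr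
    have e1 : SA / M + SB / M = (SA + SB) / M := by rw [← add_div]
    have e2 : SD / M + SD2 / M = (SD + SD2) / M := by rw [← add_div]
    linarith


end AuxProofs

/-- Under BRSS with consistent rankings and true AUC `δ₀`,
`0 ≤ (ᾱ − δ̄₀²) + (β̄ − δ̄₀²) ≤ δ₀ − δ̄₀²`. -/
theorem brss_alphaBar_betaBar_bounds {Ω : Type*} [MeasurableSpace Ω]
    (P : Measure Ω) [IsProbabilityMeasure P]
    (F G : ℝ → ℝ) {m n k l : ℕ} (Fi : Fin m → ℝ → ℝ) (Gr : Fin n → ℝ → ℝ)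
    (μ ν : Measure ℝ) [IsProbabilityMeasure μ] [IsProbabilityMeasure ν]
    (hμ : ∀ t, cdfM μ t = F t) (hν : ∀ t, cdfM ν t = G t)
    (μi : Fin m → Measure ℝ) [∀ i, IsProbabilityMeasure (μi i)]
    (hμi : ∀ i t, cdfM (μi i) t = Fi i t)
    (νr : Fin n → Measure ℝ) [∀ r, IsProbabilityMeasure (νr r)]
    (hνr : ∀ r t, cdfM (νr r) t = Gr r t)
    (δ₀ : ℝ) (hδ₀ : δ₀ = probLT μ ν)
    (X : Fin m → Fin k → Ω → ℝ) (Y : Fin n → Fin l → Ω → ℝ)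
    (hRSS : IsBRSS P F G Fi Gr X Y) :
    0 ≤ (alphaBarInt ν Fi - deltaBar0sq μi νr) + (betaBarInt μ Gr - deltaBar0sq μi νr) ∧
    (alphaBarInt ν Fi - deltaBar0sq μi νr) + (betaBarInt μ Gr - deltaBar0sq μi νr) ≤
      δ₀ - deltaBar0sq μi νr := by
  exact main_bounds hRSS.hm hRSS.hn F G Fi Gr hRSS.contF μ ν hμ hν μi hμi νr hνr
    hRSS.F_avg hRSS.G_avg δ₀ hδ₀ (alphaBarInt ν Fi) (betaBarInt μ Gr)
    (deltaBar0sq μi νr) rfl rfl rfl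
end RSSAUC
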